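/- arXiv:2312.17640 — 3 statements merged into one kernel-verified Lean document; each statement's English description precedes it below -/
import Mathlib

section
/- Let A be a real m×n matrix, b ∈ ℝ^m, and assume V = {v ∈ ℝ^n : A v ≥ b} is nonempty and bounded. Let (x^i, c^i), i = 1,…,N, be data with x^i ∈ ℝ^K and c^i ∈ ℝ^n, and for ω ∈ ℝ^{n×K} define the pessimistic regret Regret(ω) = sup{(1/N) Σ_{i=1}^N (c^i · v^i − z*(c^i)) : v^i ∈ V*(ω x^i) for each i}. Then the set of values {Regret(ω) : ω ∈ ℝ^{n×K}} is finite. -/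
open Matrix Set BigOperators

noncomputable section

/-- The polyhedron `V = {v : A v ≥ b}` (inequalities entrywise). -/
def polyV {m n : ℕ} (A : Matrix (Fin m) (Fin n) ℝ) (b : Fin m → ℝ) : Set (Fin n → ℝ) :=
  {v | b ≤ A.mulVec v}

/-- `z*(c)`: the optimal (infimum) value of `c · v` over `V`. -/
noncomputable def zstar {m n : ℕ} (A : Matrix (Fin m) (Fin n) ℝ) (b : Fin m → ℝ)
    (c : Fin n → ℝ) : ℝ :=
  sInf ((fun v => c ⬝ᵥ v) '' polyV A b)

/-- `V*(c)`: the set of optimal solutions of `min {c · v : v ∈ V}`. -/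
def Vstar {m n : ℕ} (A : Matrix (Fin m) (Fin n) ℝ) (b : Fin m → ℝ)
    (c : Fin n → ℝ) : Set (Fin n → ℝ) :=
  {v ∈ polyV A b | c ⬝ᵥ v = zstar A b c}

/-- The pessimistic regret of the linear model `ω`. -/
noncomputable def pessRegret {m n N K : ℕ} (A : Matrix (Fin m) (Fin n) ℝ) (b : Fin m → ℝ)
    (x : Fin N → Fin K → ℝ) (c : Fin N → Fin n → ℝ)
    (ω : Matrix (Fin n) (Fin K) ℝ) : ℝ :=
  sSup {r : ℝ | ∃ v : Fin N → Fin n → ℝ,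
    (∀ i, v i ∈ Vstar A b (ω.mulVec (x i))) ∧
    r = (1 / (N : ℝ)) * ∑ i, (c i ⬝ᵥ v i - zstar A b (c i))}


/-
A vertex of `V` is determined by the set of constraints that are tight at it, so `V` has finitely
many vertices. Each solution set `V*(c)` is an exposed face of the compact convex set `V`, hence
by Krein–Milman the convex hull of its own vertices, which are vertices of `V`. So `V*` takes only
finitely many values, and the regret of `ω` depends on `ω` only through the tuple `V*(ω x^i)`.
-/

open Filter Topology

theorem finite_setOf_isExposed_of_finite_extremePoints {E : Type*} [AddCommGroup E] [Module ℝ E]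
    [TopologicalSpace E] [T2Space E] [IsTopologicalAddGroup E] [ContinuousSMul ℝ E]
    [LocallyConvexSpace ℝ E] {s : Set E} (hs : IsCompact s) (hconv : Convex ℝ s)
    (hext : (s.extremePoints ℝ).Finite) : {t | IsExposed ℝ s t}.Finite := by
  refine (hext.finite_subsets.image (convexHull ℝ)).subset ?_
  intro t ht
  have htext : (t.extremePoints ℝ).Finite :=
    hext.subset ht.isExtreme.extremePoints_subset_extremePoints
  refine ⟨t.extremePoints ℝ, ht.isExtreme.extremePoints_subset_extremePoints, ?_⟩
  rw [← (htext.isClosed_convexHull ℝ).closure_eq]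
  exact closure_convexHull_extremePoints (ht.isCompact hs) (ht.convex hconv)

section Polyhedron

variable {m n : ℕ} (A : Matrix (Fin m) (Fin n) ℝ) (b : Fin m → ℝ)

theorem isClosed_polyV : IsClosed (polyV A b) :=
  isClosed_le continuous_const (Continuous.matrix_mulVec continuous_const continuous_id)

theorem convex_polyV : Convex ℝ (polyV A b) := by
  intro u hu v hv s t hs ht hst
  change b ≤ A *ᵥ (s • u + t • v)
  rw [mulVec_add, mulVec_smul, mulVec_smul]
  calc b = s • b + t • b := by rw [← add_smul, hst, one_smul]
    _ ≤ s • A *ᵥ u + t • A *ᵥ v := by gcongr; exacts [hu, hv]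

variable {A b}

theorem eq_of_mem_extremePoints_polyV {u v : Fin n → ℝ} (hu : u ∈ (polyV A b).extremePoints ℝ)
    (hv : v ∈ polyV A b) (htight : ∀ j, (A *ᵥ u) j = b j → (A *ᵥ v) j = b j) : v = u := by
  have hline : ∀ t : ℝ, A *ᵥ (u + t • (u - v)) = A *ᵥ u + t • A *ᵥ (u - v) := fun t => by
    rw [mulVec_add, mulVec_smul]
  -- Constraints tight at `u` stay tight on the line through `u` and `v`; the slack ones survive a
  -- small step. Then `u` lies strictly between `v` and `u + t • (u - v)`.
  have hnear : ∀ᶠ t in 𝓝 (0 : ℝ), u + t • (u - v) ∈ polyV A b := by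
    simp only [polyV, mem_ofPred_eq, hline, Pi.le_def, eventually_all]
    intro j
    rcases (hu.1 j).eq_or_lt with htj | htj
    · refine Eventually.of_forall fun t => ?_
      simp [mulVec_sub, ← htj, htight j htj.symm]
    · have hcont : Continuous fun t : ℝ => (A *ᵥ u + t • A *ᵥ (u - v)) j := by fun_prop
      filter_upwards [hcont.continuousAt.eventually (lt_mem_nhds (by simpa using htj))] with t ht
      exact ht.le
  obtain ⟨t, htV, ht⟩ :=
    ((hnear.filter_mono (nhdsWithin_le_nhds (s := Ioi 0))).and self_mem_nhdsWithin).exists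
  refine hu.2 hv htV
    ⟨t / (1 + t), 1 / (1 + t), by positivity, by positivity, by field_simp; ring, ?_⟩
  match_scalars <;> field_simp; ring

theorem finite_extremePoints_polyV : ((polyV A b).extremePoints ℝ).Finite := by
  refine Set.Finite.of_finite_image (Set.toFinite _)
    (f := fun v => {j | (A *ᵥ v) j = b j}) fun u hu v hv huv => ?_
  exact eq_of_mem_extremePoints_polyV hv hu.1 fun j hj => (Set.ext_iff.1 huv j).2 hj

theorem isCompact_polyV (hbd : Bornology.IsBounded (polyV A b)) : IsCompact (polyV A b) :=
  Metric.isCompact_of_isClosed_isBounded (isClosed_polyV A b) hbd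

theorem dotProduct_eq_zstar_iff (hbd : Bornology.IsBounded (polyV A b)) {c v : Fin n → ℝ}
    (hv : v ∈ polyV A b) : c ⬝ᵥ v = zstar A b c ↔ ∀ y ∈ polyV A b, c ⬝ᵥ v ≤ c ⬝ᵥ y := by
  refine ⟨fun hmin y hy => hmin ▸ csInf_le ?_ (mem_image_of_mem _ hy),
    fun hmin => (IsLeast.csInf_eq ⟨mem_image_of_mem _ hv, ?_⟩).symm⟩
  · exact ((isCompact_polyV hbd).image (continuous_const.dotProduct continuous_id)).bddBelow
  · rintro _ ⟨y, hy, rfl⟩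
    exact hmin y hy

theorem isExposed_Vstar (hbd : Bornology.IsBounded (polyV A b)) (c : Fin n → ℝ) :
    IsExposed ℝ (polyV A b) (Vstar A b c) := fun _ =>
  ⟨-(dotProductBilin ℝ ℝ c).toContinuousLinearMap, Set.ext fun _ =>
    and_congr_right fun hv => (dotProduct_eq_zstar_iff hbd hv).trans (by simp)⟩

theorem finite_range_Vstar (hbd : Bornology.IsBounded (polyV A b)) : (range (Vstar A b)).Finite :=
  (finite_setOf_isExposed_of_finite_extremePoints (isCompact_polyV hbd) (convex_polyV A b)
    finite_extremePoints_polyV).subset (range_subset_iff.2 (isExposed_Vstar hbd))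

end Polyhedron

def pessRegretOn {m n N : ℕ} (A : Matrix (Fin m) (Fin n) ℝ) (b : Fin m → ℝ)
    (c : Fin N → Fin n → ℝ) (S : Fin N → Set (Fin n → ℝ)) : ℝ :=
  sSup {r : ℝ | ∃ v : Fin N → Fin n → ℝ,
    (∀ i, v i ∈ S i) ∧ r = (1 / (N : ℝ)) * ∑ i, (c i ⬝ᵥ v i - zstar A b (c i))}

theorem stmt_1_general (m n N K : ℕ)
    (A : Matrix (Fin m) (Fin n) ℝ) (b : Fin m → ℝ)
    (hbd : Bornology.IsBounded (polyV A b))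
    (x : Fin N → Fin K → ℝ) (c : Fin N → Fin n → ℝ) :
    (Set.range fun ω : Matrix (Fin n) (Fin K) ℝ => pessRegret A b x c ω).Finite := by
  refine ((Set.Finite.pi' fun _ => finite_range_Vstar hbd).image (pessRegretOn A b c)).subset ?_
  rintro _ ⟨ω, rfl⟩
  exact ⟨fun i => Vstar A b (ω *ᵥ x i), fun i => mem_range_self _, rfl⟩

theorem stmt_1 (m n N K : ℕ)
    (A : Matrix (Fin m) (Fin n) ℝ) (b : Fin m → ℝ)
    (hne : (polyV A b).Nonempty) (hbd : Bornology.IsBounded (polyV A b))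
    (x : Fin N → Fin K → ℝ) (c : Fin N → Fin n → ℝ) :
    (Set.range fun ω : Matrix (Fin n) (Fin K) ℝ => pessRegret A b x c ω).Finite :=
  stmt_1_general m n N K A b hbd x c
end
end

section
/- Let A be a real m×n matrix, b ∈ ℝ^m, and assume V = {v ∈ ℝ^n : A v ≥ b} is nonempty and bounded. Fix ω ∈ ℝ^{n×K} and data (x^i, c^i), i = 1,…,N. Suppose μ^i ∈ ℝ^m, δ^i ∈ ℝ^n and γ^i ∈ ℝ satisfy, for every i: A^T μ^i + γ^i (ω x^i) = (1/N) c^i, A δ^i − γ^i b ≥ 0, μ^i ≤ 0 and γ^i ≥ 0. Then for every choice of v^i ∈ V*(ω x^i), i = 1,…,N, one has (1/N) Σ_{i=1}^N c^i · v^i ≤ Σ_{i=1}^N ( b · μ^i + (ω x^i) · δ^i ). -/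
open Matrix Set BigOperators

noncomputable section

/-!
Each summand is bounded by weak LP duality. Pairing the dual equation with an optimal `v`
gives `(1/N) c · v = μ · A v + γ (q · v)` with `q = ω x`. The first term is at most `b · μ`
since `μ ≤ 0` and `A v ≥ b`. For the second: if `γ > 0` then `δ / γ ∈ V`, so optimality of `v`
gives `γ (q · v) ≤ q · δ`; if `γ = 0` then `A δ ≥ 0`, so `v + δ ∈ V` and optimality gives `0 ≤ q · δ`.
-/

lemma bddBelow_image_dotProduct {ι : Type*} [Fintype ι] {s : Set (ι → ℝ)}
    (hs : Bornology.IsBounded s) (c : ι → ℝ) : BddBelow ((fun v => c ⬝ᵥ v) '' s) :=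
  ((LinearMap.toContinuousLinearMap (dotProductBilin ℝ ℝ c)).lipschitz.isBounded_image hs).bddBelow

lemma dotProduct_mulVec_le_of_nonpos {m n : ℕ} {A : Matrix (Fin m) (Fin n) ℝ} {b μ : Fin m → ℝ}
    {v : Fin n → ℝ} (hv : v ∈ polyV A b) (hμ : μ ≤ 0) : μ ⬝ᵥ A *ᵥ v ≤ b ⬝ᵥ μ := by
  simpa [dotProduct_comm b] using dotProduct_le_dotProduct_of_nonneg_left hv (neg_nonneg.2 hμ)

lemma inv_smul_mem_polyV {m n : ℕ} {A : Matrix (Fin m) (Fin n) ℝ} {b : Fin m → ℝ}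
    {γ : ℝ} {δ : Fin n → ℝ} (hγ : 0 < γ) (h : γ • b ≤ A *ᵥ δ) : γ⁻¹ • δ ∈ polyV A b := by
  have := smul_le_smul_of_nonneg_left h (inv_nonneg.2 hγ.le)
  rwa [inv_smul_smul₀ hγ.ne', ← mulVec_smul] at this

lemma add_mem_polyV {m n : ℕ} {A : Matrix (Fin m) (Fin n) ℝ} {b : Fin m → ℝ}
    {v d : Fin n → ℝ} (hv : v ∈ polyV A b) (hd : 0 ≤ A *ᵥ d) : v + d ∈ polyV A b := by
  simpa [polyV, mulVec_add] using add_le_add hv hd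

lemma dotProduct_le_of_mem_Vstar {m n : ℕ} {A : Matrix (Fin m) (Fin n) ℝ} {b : Fin m → ℝ}
    (hbd : Bornology.IsBounded (polyV A b)) {c v w : Fin n → ℝ} (hv : v ∈ Vstar A b c)
    (hw : w ∈ polyV A b) : c ⬝ᵥ v ≤ c ⬝ᵥ w :=
  hv.2 ▸ csInf_le (bddBelow_image_dotProduct hbd c) ⟨w, hw, rfl⟩

lemma smul_dotProduct_le_of_mem_Vstar {m n : ℕ} {A : Matrix (Fin m) (Fin n) ℝ}
    {b : Fin m → ℝ} (hbd : Bornology.IsBounded (polyV A b)) {q v δ : Fin n → ℝ} {γ : ℝ}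
    (hv : v ∈ Vstar A b q) (hγ : 0 ≤ γ) (hδ : γ • b ≤ A *ᵥ δ) : γ * (q ⬝ᵥ v) ≤ q ⬝ᵥ δ := by
  rcases hγ.eq_or_lt with rfl | hγ
  · have hopt := dotProduct_le_of_mem_Vstar hbd hv (add_mem_polyV hv.1 (by simpa using hδ))
    rw [dotProduct_add] at hopt
    linarith
  · have hopt := dotProduct_le_of_mem_Vstar hbd hv (inv_smul_mem_polyV hγ hδ)
    rw [dotProduct_smul, smul_eq_mul] at hopt
    calc γ * (q ⬝ᵥ v) ≤ γ * (γ⁻¹ * (q ⬝ᵥ δ)) := mul_le_mul_of_nonneg_left hopt hγ.le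
      _ = q ⬝ᵥ δ := mul_inv_cancel_left₀ hγ.ne' _

lemma dotProduct_eq_of_transpose_mulVec_add_smul_eq {m n : ℕ} {A : Matrix (Fin m) (Fin n) ℝ}
    {μ : Fin m → ℝ} {γ : ℝ} {q c : Fin n → ℝ} (h : Aᵀ *ᵥ μ + γ • q = c) (v : Fin n → ℝ) :
    c ⬝ᵥ v = μ ⬝ᵥ A *ᵥ v + γ * (q ⬝ᵥ v) := by
  rw [← h, add_dotProduct, smul_dotProduct, mulVec_transpose, ← dotProduct_mulVec, smul_eq_mul]

lemma dotProduct_le_of_dual_feasible {m n : ℕ} {A : Matrix (Fin m) (Fin n) ℝ} {b : Fin m → ℝ}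
    (hbd : Bornology.IsBounded (polyV A b)) {q c v δ : Fin n → ℝ} {μ : Fin m → ℝ} {γ : ℝ}
    (hdual : Aᵀ *ᵥ μ + γ • q = c) (hδ : γ • b ≤ A *ᵥ δ) (hμ : μ ≤ 0) (hγ : 0 ≤ γ)
    (hv : v ∈ Vstar A b q) : c ⬝ᵥ v ≤ b ⬝ᵥ μ + q ⬝ᵥ δ := by
  rw [dotProduct_eq_of_transpose_mulVec_add_smul_eq hdual]
  exact add_le_add (dotProduct_mulVec_le_of_nonpos hv.1 hμ)
    (smul_dotProduct_le_of_mem_Vstar hbd hv hγ hδ)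

theorem stmt_6_general (m n N K : ℕ)
    (A : Matrix (Fin m) (Fin n) ℝ) (b : Fin m → ℝ)
    (hbd : Bornology.IsBounded (polyV A b))
    (ω : Matrix (Fin n) (Fin K) ℝ)
    (x : Fin N → Fin K → ℝ) (c : Fin N → Fin n → ℝ)
    (μ : Fin N → Fin m → ℝ) (δ : Fin N → Fin n → ℝ) (γ : Fin N → ℝ)
    (hfeas : ∀ i, Aᵀ.mulVec (μ i) + γ i • ω.mulVec (x i) = (1 / (N : ℝ)) • c i ∧
        γ i • b ≤ A.mulVec (δ i) ∧ μ i ≤ 0 ∧ 0 ≤ γ i) :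
    ∀ v : Fin N → Fin n → ℝ, (∀ i, v i ∈ Vstar A b (ω.mulVec (x i))) →
      (1 / (N : ℝ)) * ∑ i, c i ⬝ᵥ v i ≤
        ∑ i, (b ⬝ᵥ μ i + ω.mulVec (x i) ⬝ᵥ δ i) := by
  intro v hv
  rw [Finset.mul_sum]
  refine Finset.sum_le_sum fun i _ => ?_
  obtain ⟨hdual, hδ, hμ, hγ⟩ := hfeas i
  rw [← smul_eq_mul, ← smul_dotProduct]
  exact dotProduct_le_of_dual_feasible hbd hdual hδ hμ hγ (hv i)

theorem stmt_6 (m n N K : ℕ)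
    (A : Matrix (Fin m) (Fin n) ℝ) (b : Fin m → ℝ)
    (hne : (polyV A b).Nonempty) (hbd : Bornology.IsBounded (polyV A b))
    (ω : Matrix (Fin n) (Fin K) ℝ)
    (x : Fin N → Fin K → ℝ) (c : Fin N → Fin n → ℝ)
    (μ : Fin N → Fin m → ℝ) (δ : Fin N → Fin n → ℝ) (γ : Fin N → ℝ)
    (hfeas : ∀ i, Aᵀ.mulVec (μ i) + γ i • ω.mulVec (x i) = (1 / (N : ℝ)) • c i ∧
        γ i • b ≤ A.mulVec (δ i) ∧ μ i ≤ 0 ∧ 0 ≤ γ i) :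
    ∀ v : Fin N → Fin n → ℝ, (∀ i, v i ∈ Vstar A b (ω.mulVec (x i))) →
      (1 / (N : ℝ)) * ∑ i, c i ⬝ᵥ v i ≤
        ∑ i, (b ⬝ᵥ μ i + ω.mulVec (x i) ⬝ᵥ δ i) :=
  stmt_6_general m n N K A b hbd ω x c μ δ γ hfeas
end
end

section
/- Let A be a real m×n matrix, b ∈ ℝ^m, and assume V = {v ∈ ℝ^n : A v ≥ b} is nonempty and bounded. Then for every c ∈ ℝ^n there exist v ∈ ℝ^n and ρ ∈ ℝ^m such that A v ≥ b, ρ ≥ 0, A^T ρ = c, and c · v ≤ b · ρ; that is, the primal–dual strong duality system of the linear program min{c · v : A v ≥ b} is feasible for every objective c. -/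
/-!
The polyhedron is compact, so `c ⬝ᵥ ·` attains its minimum `α` on it at some `v₀`. Farkas' lemma
for the cone spanned by the rows `(Aᵢ, bᵢ)` and `(0, -1)` either writes `(c, α)` as a nonnegative
combination of them, which is the dual certificate `ρ`, or gives `(w, t)` with `t ≤ 0`,
`A w + t b ≥ 0` and `c ⬝ᵥ w + α t < 0`; then `(w + v₀) / (1 - t)` is feasible with value below `α`.
Farkas' lemma rests on the closedness of finitely generated cones, which follows from
Carathéodory's theorem for cones.
-/

open Matrix Set BigOperators

section Caratheodory

variable {𝕜 E ι : Type*} [Field 𝕜] [LinearOrder 𝕜] [IsStrictOrderedRing 𝕜]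
  [AddCommGroup E] [Module 𝕜 E] [DecidableEq ι] {g : ι → E} {s : Finset ι} {ρ d : ι → 𝕜}

/-- Moving along a linear dependency `d` until the first coefficient vanishes. -/
lemma exists_nonneg_sum_erase_eq_of_sum_eq_zero (hρ : ∀ i ∈ s, 0 ≤ ρ i)
    (hd : ∑ i ∈ s, d i • g i = 0) (hd₀ : ∃ i ∈ s, d i ≠ 0) :
    ∃ i₀ ∈ s, ∃ σ : ι → 𝕜, (∀ i ∈ s.erase i₀, 0 ≤ σ i) ∧
      ∑ i ∈ s.erase i₀, σ i • g i = ∑ i ∈ s, ρ i • g i := by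
  wlog hpos : ∃ i ∈ s, 0 < d i generalizing d
  · obtain ⟨i, hi, hdi⟩ := hd₀
    have hneg : d i < 0 := (not_lt.mp fun h => hpos ⟨i, hi, h⟩).lt_of_ne hdi
    exact this (d := -d) (by simp [neg_smul, hd]) ⟨i, hi, by simpa using hdi⟩
      ⟨i, hi, neg_pos.mpr hneg⟩
  obtain ⟨i₀, hi₀, hmin⟩ := Finset.exists_min_image (s.filter (0 < d ·)) (fun i => ρ i / d i)
    (by simpa [Finset.Nonempty] using hpos)
  rw [Finset.mem_filter] at hi₀
  set μ := ρ i₀ / d i₀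
  have hμ : 0 ≤ μ := div_nonneg (hρ i₀ hi₀.1) hi₀.2.le
  refine ⟨i₀, hi₀.1, fun i => ρ i - μ * d i, fun i hi => ?_, ?_⟩
  · have hi := Finset.mem_of_mem_erase hi
    rcases le_or_gt (d i) 0 with hdi | hdi
    · nlinarith [hρ i hi]
    · have := hmin i (Finset.mem_filter.mpr ⟨hi, hdi⟩)
      rw [le_div_iff₀ hdi] at this
      linarith
  · rw [Finset.sum_erase _ (by simp [μ, div_mul_cancel₀ _ hi₀.2.ne'])]
    simp only [sub_smul, mul_smul, Finset.sum_sub_distrib, ← Finset.smul_sum, hd, smul_zero,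
      sub_zero]

/-- Carathéodory's theorem for cones. -/
theorem exists_linearIndepOn_nonneg_sum_eq (hρ : ∀ i ∈ s, 0 ≤ ρ i) :
    ∃ t ⊆ s, LinearIndepOn 𝕜 g (t : Set ι) ∧ ∃ σ : ι → 𝕜, (∀ i ∈ t, 0 ≤ σ i) ∧
      ∑ i ∈ t, σ i • g i = ∑ i ∈ s, ρ i • g i := by
  induction s using Finset.strongInduction generalizing ρ with
  | H s ih =>
  by_cases hli : LinearIndepOn 𝕜 g (s : Set ι)
  · exact ⟨s, subset_rfl, hli, ρ, hρ, rfl⟩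
  obtain ⟨d, hd, hd₀⟩ := not_linearIndepOn_finset_iff.mp hli
  obtain ⟨i₀, hi₀, σ, hσ, hsum⟩ := exists_nonneg_sum_erase_eq_of_sum_eq_zero hρ hd hd₀
  obtain ⟨t, hts, hlin, τ, hτ, htsum⟩ := ih _ (Finset.erase_ssubset hi₀) hσ
  exact ⟨t, hts.trans (Finset.erase_subset _ _), hlin, τ, hτ, htsum.trans hsum⟩

end Caratheodory

section ClosedCone

variable {E ι : Type*} [NormedAddCommGroup E] [NormedSpace ℝ E] [Fintype ι]

lemma isClosed_image_linearCombination_nonneg_of_linearIndependent {g : ι → E}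
    (hg : LinearIndependent ℝ g) :
    IsClosed (Fintype.linearCombination ℝ g '' {ρ | 0 ≤ ρ}) := by
  have hinj := linearIndependent_iff_injective_fintypeLinearCombination.mp hg
  exact (LinearMap.isClosedEmbedding_of_injective (LinearMap.ker_eq_bot.mpr hinj)).isClosedMap _
    (isClosed_le continuous_const continuous_id)

theorem isClosed_image_linearCombination_nonneg (g : ι → E) :
    IsClosed (Fintype.linearCombination ℝ g '' {ρ | 0 ≤ ρ}) := by
  classical
  have hunion : Fintype.linearCombination ℝ g '' {ρ | 0 ≤ ρ} =
      ⋃ t : {t : Finset ι // LinearIndepOn ℝ g (t : Set ι)},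
        Fintype.linearCombination ℝ (fun i : (t : Finset ι) => g i) '' {ρ | 0 ≤ ρ} := by
    ext x
    simp only [mem_image, mem_iUnion, Fintype.linearCombination_apply]
    constructor
    · rintro ⟨ρ, hρ, rfl⟩
      obtain ⟨t, -, hli, σ, hσ, hsum⟩ :=
        exists_linearIndepOn_nonneg_sum_eq (g := g) (s := Finset.univ) fun i _ => hρ i
      exact ⟨⟨t, hli⟩, fun i => σ i, fun i => hσ i i.2,
        (t.sum_coe_sort fun i => σ i • g i).trans hsum⟩
    · rintro ⟨⟨t, _⟩, ρ, hρ, rfl⟩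
      refine ⟨fun i => if h : i ∈ t then ρ ⟨i, h⟩ else 0, fun i => ?_, ?_⟩
      · dsimp only
        split_ifs
        exacts [hρ _, le_rfl]
      · rw [← Finset.sum_subset t.subset_univ fun i _ hi => by simp [hi], ← t.sum_attach]
        exact Finset.sum_congr rfl fun i _ => by simp [i.2]
  rw [hunion]
  exact isClosed_iUnion_of_finite fun t =>
    isClosed_image_linearCombination_nonneg_of_linearIndependent t.2

end ClosedCone

/-- Farkas' lemma. -/
theorem Matrix.exists_nonneg_vecMul_eq_or_exists_nonneg_mulVec {ι κ : Type*} [Fintype ι]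
    [Fintype κ] (M : Matrix ι κ ℝ) (p : κ → ℝ) :
    (∃ σ, 0 ≤ σ ∧ σ ᵥ* M = p) ∨ ∃ y, 0 ≤ M *ᵥ y ∧ p ⬝ᵥ y < 0 := by
  classical
  refine or_iff_not_imp_left.mpr fun hp => ?_
  set K := PointedCone.map (vecMulLinear M) (PointedCone.positive ℝ (ι → ℝ))
  have hK : (K : Set (κ → ℝ)) = Fintype.linearCombination ℝ (fun i => M i) '' {σ | 0 ≤ σ} := by
    rw [PointedCone.coe_map]
    congr 1
    ext σ k
    simp [vecMul_eq_sum, Fintype.linearCombination_apply]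
  have hKclosed : IsClosed (K : Set (κ → ℝ)) :=
    hK ▸ isClosed_image_linearCombination_nonneg fun i => M i
  let C : ProperCone ℝ (κ → ℝ) := ⟨K, hKclosed⟩
  obtain ⟨f, hfC, hfp⟩ :=
    C.hyperplane_separation_point (x₀ := p) fun ⟨σ, hσ, hσp⟩ => hp ⟨σ, hσ, hσp⟩
  set y : κ → ℝ := fun k => f fun j => if k = j then 1 else 0
  have hf : ∀ x, f x = x ⬝ᵥ y := LinearMap.pi_apply_eq_sum_univ f.toLinearMap
  refine ⟨y, fun i => ?_, by rwa [← hf]⟩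
  have hrow : M i ∈ C := ⟨Pi.single i 1, by simp, single_one_vecMul i M⟩
  simpa [mulVec, hf] using hfC _ hrow

theorem Matrix.exists_dual_of_isMinOn {m n : Type*} [Fintype m] [Fintype n] {A : Matrix m n ℝ}
    {b : m → ℝ} {c v₀ : n → ℝ} (hv₀ : b ≤ A *ᵥ v₀)
    (hmin : IsMinOn (c ⬝ᵥ ·) {v | b ≤ A *ᵥ v} v₀) :
    ∃ ρ, 0 ≤ ρ ∧ Aᵀ *ᵥ ρ = c ∧ c ⬝ᵥ v₀ ≤ b ⬝ᵥ ρ := by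
  rcases exists_nonneg_vecMul_eq_or_exists_nonneg_mulVec
      (fromBlocks A (replicateCol Unit b) 0 (-1 : Matrix Unit Unit ℝ))
      (Sum.elim c fun _ => c ⬝ᵥ v₀) with ⟨σ, hσ, hσp⟩ | ⟨y, hy, hyp⟩
  · rw [vecMul_fromBlocks, Sum.elim_eq_iff] at hσp
    refine ⟨σ ∘ Sum.inl, fun i => hσ _, by simpa [mulVec_transpose] using hσp.1, ?_⟩
    have hval : b ⬝ᵥ (σ ∘ Sum.inl) - σ (Sum.inr ()) = c ⬝ᵥ v₀ := by
      simpa [vecMul, dotProduct, mul_comm, sub_eq_add_neg] using congrFun hσp.2 ()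
    have hμ : 0 ≤ σ (Sum.inr ()) := hσ _
    linarith
  · exfalso
    obtain ⟨w, t, rfl⟩ : ∃ w t, y = Sum.elim w fun _ => t :=
      ⟨y ∘ Sum.inl, y (Sum.inr ()), by ext (i | i) <;> rfl⟩
    have hw : ∀ i, 0 ≤ (A *ᵥ w) i + b i * t := fun i => by
      simpa [fromBlocks_mulVec, mulVec, dotProduct] using hy (Sum.inl i)
    have ht : t ≤ 0 := by simpa [fromBlocks_mulVec, mulVec, dotProduct] using hy (Sum.inr ())
    have hc : c ⬝ᵥ w + (c ⬝ᵥ v₀) * t < 0 := by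
      simpa [dotProduct, Fintype.sum_sum_type] using hyp
    set v := (1 - t)⁻¹ • (w + v₀)
    have hpos : 0 < 1 - t := by linarith
    have hv : b ≤ A *ᵥ v := fun i => by
      simp only [v, mulVec_smul, mulVec_add, Pi.smul_apply, Pi.add_apply, smul_eq_mul]
      rw [le_inv_mul_iff₀ hpos]
      nlinarith [hw i, hv₀ i]
    have hcv : c ⬝ᵥ v < c ⬝ᵥ v₀ := by
      simp only [v, dotProduct_smul, dotProduct_add, smul_eq_mul]
      rw [inv_mul_lt_iff₀ hpos]
      linarith
    exact (hmin hv).not_gt hcv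

theorem stmt_14 (m n : ℕ)
    (A : Matrix (Fin m) (Fin n) ℝ) (b : Fin m → ℝ)
    (hne : {v : Fin n → ℝ | b ≤ A.mulVec v}.Nonempty)
    (hbd : Bornology.IsBounded {v : Fin n → ℝ | b ≤ A.mulVec v}) :
    ∀ c : Fin n → ℝ, ∃ (v : Fin n → ℝ) (ρ : Fin m → ℝ),
      b ≤ A.mulVec v ∧ 0 ≤ ρ ∧ Aᵀ.mulVec ρ = c ∧ c ⬝ᵥ v ≤ b ⬝ᵥ ρ := by
  intro c
  have hclosed : IsClosed {v : Fin n → ℝ | b ≤ A.mulVec v} :=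
    isClosed_le continuous_const (continuous_const.matrix_mulVec continuous_id)
  obtain ⟨v, hv, hmin⟩ := (Metric.isCompact_of_isClosed_isBounded hclosed hbd).exists_isMinOn hne
    (continuous_const.dotProduct continuous_id).continuousOn
  obtain ⟨ρ, hρ, hAρ, hval⟩ := exists_dual_of_isMinOn hv hmin
  exact ⟨v, ρ, hv, hρ, hAρ, hval⟩
end
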